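/- arXiv:2310.05257 — 11 statements merged into one kernel-verified Lean document; each statement's English description precedes it below -/
import Mathlib

section
/- Suppose the pair (A, A₀) satisfies weak Property N with 𝟙† ∈ T, and 𝟙† is the unique element of T with 𝟙 + 𝟙† ∈ A₀ and 𝟙† is invertible in the monoid T. Then (𝟙†)² = 𝟙, and if T is a multiplicative group then (A, A₀) is uniquely negated: a + b ∈ A₀ with a, b ∈ T implies b = a·𝟙†. -/
/-- A general (non-distributive, non-associative) admissible `T`-pair:
an additive commutative monoid `A` with a multiplication and unit, a set of
tangible elements `T` forming a multiplicative monoid which acts distributively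
on `A`, and a `T`-submodule `A0` of "null" elements with `A0 ∩ T ⊆ {0}`,
such that `T` additively spans `A`. -/
structure NdPair (A : Type*) [AddCommMonoid A] [Mul A] [One A] where
  T : Set A
  A0 : Set A
  one_mem : (1 : A) ∈ T
  T_mul : ∀ a b : A, a ∈ T → b ∈ T → a * b ∈ T
  one_mul' : ∀ b : A, 1 * b = b
  mul_one' : ∀ b : A, b * 1 = b
  zero_mul' : ∀ b : A, (0 : A) * b = 0
  mul_zero' : ∀ b : A, b * (0 : A) = 0
  left_distrib' : ∀ a b c : A, a ∈ T → a * (b + c) = a * b + a * c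
  right_distrib' : ∀ a b c : A, a ∈ T → (b + c) * a = b * a + c * a
  assoc_left : ∀ a₁ a₂ b : A, a₁ ∈ T → a₂ ∈ T → a₁ * (a₂ * b) = (a₁ * a₂) * b
  assoc_right : ∀ a₁ a₂ b : A, a₁ ∈ T → a₂ ∈ T → (b * a₁) * a₂ = b * (a₁ * a₂)
  assoc_mid : ∀ a₁ a₂ b : A, a₁ ∈ T → a₂ ∈ T → (a₁ * b) * a₂ = a₁ * (b * a₂)
  zero_mem_A0 : (0 : A) ∈ A0
  A0_add : ∀ x y : A, x ∈ A0 → y ∈ A0 → x + y ∈ A0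
  A0_mul_left : ∀ a x : A, a ∈ T → x ∈ A0 → a * x ∈ A0
  A0_mul_right : ∀ a x : A, a ∈ T → x ∈ A0 → x * a ∈ A0
  A0_inter_T : ∀ x : A, x ∈ A0 → x ∈ T → x = 0
  spanned : ∀ b : A, ∃ l : List A, (∀ x ∈ l, x ∈ T) ∧ l.sum = b

/-- Suppose the pair `(A, A₀)` satisfies weak Property N with `𝟙† ∈ T` the
unique tangible element with `𝟙 + 𝟙† ∈ A₀`, and `𝟙†` invertible in `T`. Then
`(𝟙†)² = 𝟙`, and if `T` is a multiplicative group then the pair is uniquely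
negated: `a + b ∈ A₀` with `a, b ∈ T` implies `b = a·𝟙†`. -/
theorem dag_sq_eq_one_and_uniquely_negated {A : Type*} [AddCommMonoid A] [Mul A] [One A]
    (P : NdPair A) (dag : A) (hdag : dag ∈ P.T)
    (he : (1 : A) + dag ∈ P.A0)
    (huniq : ∀ a : A, a ∈ P.T → (1 : A) + a ∈ P.A0 → a = dag)
    (hinv : ∃ c : A, c ∈ P.T ∧ dag * c = 1 ∧ c * dag = 1) :
    dag * dag = 1 ∧
    ((∀ a : A, a ∈ P.T → ∃ b : A, b ∈ P.T ∧ a * b = 1 ∧ b * a = 1) →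
      ∀ a b : A, a ∈ P.T → b ∈ P.T → a + b ∈ P.A0 → b = a * dag) := by
  obtain ⟨c, hc, hdc, hcd⟩ := hinv
  have hkey : c = dag := by
    apply huniq c hc
    have h1 : c * ((1 : A) + dag) ∈ P.A0 := P.A0_mul_left _ _ hc he
    have h2 : c * ((1 : A) + dag) = (1 : A) + c := by
      rw [P.left_distrib' _ _ _ hc, P.mul_one' c, hcd, add_comm]
    rwa [h2] at h1
  constructor
  · rw [← hkey] at hdc ⊢; exact hdc
  · intro hgrp a b ha hb hab
    obtain ⟨a', ha', haa', ha'a⟩ := hgrp a ha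
    have h1 : a' * (a + b) ∈ P.A0 := P.A0_mul_left _ _ ha' hab
    have h2 : a' * (a + b) = (1 : A) + a' * b := by
      rw [P.left_distrib' _ _ _ ha', ha'a]
    rw [h2] at h1
    have heq : a' * b = dag := huniq _ (P.T_mul _ _ ha' hb) h1
    calc b = (1 : A) * b := (P.one_mul' b).symm
    _ = (a * a') * b := by rw [haa']
    _ = a * (a' * b) := (P.assoc_left _ _ _ ha ha').symm
    _ = a * dag := by rw [heq]
end

section
/- In any metatangible pair (A, A₀) one has T + A₀ = A; that is, every element of A can be written as a + b with a ∈ T ∪ {0} and b ∈ A₀, or lies in T ∪ A₀. -/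
/-- A pair satisfying Property N: there is a distinguished tangible element
`dag = 𝟙†` with `e = 𝟙 + 𝟙† ∈ A₀`, such that any sum of two tangibles landing
in `A₀` equals `a ∘ = a·e = a·(𝟙 + 𝟙†)`. -/
structure PropNPair (A : Type*) [AddCommMonoid A] [Mul A] [One A] extends NdPair A where
  dag : A
  dag_mem : dag ∈ T
  e_mem : (1 : A) + dag ∈ A0
  propN : ∀ a b : A, a ∈ T → b ∈ T → a + b ∈ A0 → a + b = a * (1 + dag)

/-- A metatangible pair: a pair with Property N in which the sum of any two
tangible elements lies in `T ∪ A₀`. -/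
structure MetaPair (A : Type*) [AddCommMonoid A] [Mul A] [One A] extends PropNPair A where
  metatangible : ∀ a b : A, a ∈ T → b ∈ T → a + b ∈ T ∨ a + b ∈ A0

namespace MetaPair

variable {A : Type*} [AddCommMonoid A] [Mul A] [One A] (P : MetaPair A)

def tangibleAddNull : Set A :=
  {c | ∃ a b : A, (a ∈ P.T ∨ a = 0) ∧ b ∈ P.A0 ∧ c = a + b}

theorem zero_mem_tangibleAddNull : (0 : A) ∈ P.tangibleAddNull :=
  ⟨0, 0, Or.inr rfl, P.zero_mem_A0, (add_zero 0).symm⟩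

theorem add_mem_tangibleAddNull {x c : A} (hx : x ∈ P.T) (hc : c ∈ P.tangibleAddNull) :
    x + c ∈ P.tangibleAddNull := by
  obtain ⟨a, b, ha | rfl, hb, rfl⟩ := hc
  · rcases P.metatangible x a hx ha with hxa | hxa
    · exact ⟨x + a, b, Or.inl hxa, hb, (add_assoc x a b).symm⟩
    · exact ⟨0, x + a + b, Or.inr rfl, P.A0_add _ _ hxa hb, by rw [zero_add, add_assoc]⟩
  · exact ⟨x, b, Or.inl hx, hb, by rw [zero_add]⟩

theorem list_sum_mem_tangibleAddNull {l : List A} (hl : ∀ x ∈ l, x ∈ P.T) :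
    l.sum ∈ P.tangibleAddNull := by
  induction l with
  | nil => exact P.zero_mem_tangibleAddNull
  | cons x l ih =>
    rw [List.sum_cons]
    exact P.add_mem_tangibleAddNull (hl x List.mem_cons_self)
      (ih fun y hy => hl y (List.mem_cons_of_mem x hy))

theorem tangibleAddNull_eq_univ : P.tangibleAddNull = Set.univ :=
  Set.eq_univ_of_forall fun c => by
    obtain ⟨l, hl, rfl⟩ := P.spanned c
    exact P.list_sum_mem_tangibleAddNull hl

end MetaPair

/-- In any metatangible pair, `T + A₀ = A`: every element of `A` can be written
as `a + b` with `a ∈ T ∪ {0}` and `b ∈ A₀`. -/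
theorem tangible_plus_null {A : Type*} [AddCommMonoid A] [Mul A] [One A]
    (P : MetaPair A) :
    ∀ c : A, ∃ a b : A, (a ∈ P.T ∨ a = 0) ∧ b ∈ P.A0 ∧ c = a + b :=
  Set.eq_univ_iff_forall.mp P.tangibleAddNull_eq_univ
end

section
/- Any A₀-bipotent pair (A, A₀) of the second kind is additively idempotent: b + b = b for all b ∈ A. -/
theorem List.sum_add_self_of_forall_add_self {M : Type*} [AddCommMonoid M] {l : List M}
    (h : ∀ x ∈ l, x + x = x) : l.sum + l.sum = l.sum :=
  l.sum_induction (fun x => x + x = x) (fun a b ha hb => by rw [add_add_add_comm, ha, hb])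
    (zero_add 0) h

/-- Any `A₀`-bipotent pair of the second kind is additively idempotent:
`b + b = b` for all `b ∈ A`. -/
theorem bipotent_second_kind_idempotent {A : Type*} [AddCommMonoid A] [Mul A] [One A]
    (P : MetaPair A)
    (hbip : ∀ a b : A, a ∈ P.T → b ∈ P.T → a + b = a ∨ a + b = b ∨ a + b ∈ P.A0)
    (hsecond : ∀ a : A, a ∈ P.T → a + a ∉ P.A0) :
    ∀ b : A, b + b = b := by
  have tangible_add_self : ∀ a ∈ P.T, a + a = a := by
    intro a ha
    rcases hbip a a ha ha with h | h | h_null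
    · exact h
    · exact h
    · exact absurd h_null (hsecond a ha)
  intro b
  obtain ⟨l, hl, rfl⟩ := P.spanned b
  exact l.sum_add_self_of_forall_add_self fun x hx => tangible_add_self x (hl x hx)
end

section
/- Let (A, A₀) be a metatangible pair of the second kind (a + a ∉ A₀ for all a ∈ T). Then (A, A₀) is e-idempotent: e + e = e, where e = 𝟙 + 𝟙†. Moreover, letting e' = e + 𝟙, either e' = e or e' ∈ T, and e'·e = e. -/
/-- A (commutative) semiring pair: a commutative semiring `A` with a
multiplicative submonoid `T` of tangible elements additively spanning `A`,
and a `T`-submodule `A₀` of null elements with `A₀ ∩ T ⊆ {0}`. -/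
structure CSPair (A : Type*) [CommSemiring A] where
  T : Set A
  A0 : Set A
  one_mem : (1 : A) ∈ T
  T_mul : ∀ a b : A, a ∈ T → b ∈ T → a * b ∈ T
  zero_mem_A0 : (0 : A) ∈ A0
  A0_add : ∀ x y : A, x ∈ A0 → y ∈ A0 → x + y ∈ A0
  A0_mul : ∀ a x : A, a ∈ T → x ∈ A0 → a * x ∈ A0
  A0_inter_T : ∀ x : A, x ∈ A0 → x ∈ T → x = 0
  spanned : ∀ b : A, ∃ l : List A, (∀ x ∈ l, x ∈ T) ∧ l.sum = b

/-- A commutative semiring pair satisfying Property N. -/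
structure CSPropNPair (A : Type*) [CommSemiring A] extends CSPair A where
  dag : A
  dag_mem : dag ∈ T
  e_mem : (1 : A) + dag ∈ A0
  propN : ∀ a b : A, a ∈ T → b ∈ T → a + b ∈ A0 → a + b = a * (1 + dag)

/-- Let `(A, A₀)` be a metatangible (commutative semiring) pair of the second
kind. Then it is `e`-idempotent: `e + e = e` where `e = 𝟙 + 𝟙†`; moreover,
letting `e' = e + 𝟙`, either `e' = e` or `e' ∈ T`, and `e'·e = e`. -/
theorem second_kind_e_idempotent {A : Type*} [CommSemiring A] (P : CSPropNPair A)
    (hmeta : ∀ a b : A, a ∈ P.T → b ∈ P.T → a + b ∈ P.T ∨ a + b ∈ P.A0)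
    (hsecond : ∀ a : A, a ∈ P.T → a + a ∉ P.A0) :
    ((1 : A) + P.dag) + ((1 : A) + P.dag) = (1 : A) + P.dag ∧
    ((((1 : A) + P.dag) + 1 = (1 : A) + P.dag) ∨ ((1 : A) + P.dag) + 1 ∈ P.T) ∧
    (((1 : A) + P.dag) + 1) * ((1 : A) + P.dag) = (1 : A) + P.dag := by
  have hde : P.dag * ((1 : A) + P.dag) = 1 + P.dag := by
    have h := P.propN P.dag 1 P.dag_mem P.one_mem (by rw [add_comm]; exact P.e_mem)
    rw [← h, add_comm]
  have h2 : (1 : A) + 1 ∈ P.T := by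
    rcases hmeta 1 1 P.one_mem P.one_mem with h | h
    · exact h
    · exact absurd h (hsecond 1 P.one_mem)
  have key : (((1 : A) + P.dag) + ((1 : A) + P.dag) = (1 : A) + P.dag) ∧
      ((((1 : A) + P.dag) + 1 = (1 : A) + P.dag) ∨ ((1 : A) + P.dag) + 1 ∈ P.T) := by
    rcases hmeta (1 + 1) P.dag h2 P.dag_mem with hT | hA0
    · have h := P.propN P.dag ((1 : A) + 1 + P.dag) P.dag_mem hT
        (by
          have h' := P.A0_add _ _ P.e_mem P.e_mem
          have heq : P.dag + ((1 : A) + 1 + P.dag) = (1 + P.dag) + (1 + P.dag) := by ring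
          rw [heq]; exact h')
      constructor
      · calc ((1 : A) + P.dag) + ((1 : A) + P.dag)
            = P.dag + ((1 : A) + 1 + P.dag) := by ring
          _ = P.dag * (1 + P.dag) := h
          _ = 1 + P.dag := hde
      · refine Or.inr ?_
        have heq : (1 : A) + P.dag + 1 = 1 + 1 + P.dag := by ring
        rw [heq]; exact hT
    · have h := P.propN P.dag ((1 : A) + 1) P.dag_mem h2
        (by
          have heq : P.dag + ((1 : A) + 1) = 1 + 1 + P.dag := by ring
          rw [heq]; exact hA0)
      have he1 : (1 : A) + P.dag + 1 = 1 + P.dag := by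
        calc (1 : A) + P.dag + 1 = P.dag + ((1 : A) + 1) := by ring
          _ = P.dag * (1 + P.dag) := h
          _ = 1 + P.dag := hde
      have hed : (1 : A) + P.dag + P.dag = 1 + P.dag := by
        calc (1 : A) + P.dag + P.dag = P.dag * ((1 : A) + P.dag) + P.dag := by rw [hde]
          _ = P.dag * ((1 : A) + P.dag + 1) := by ring
          _ = P.dag * ((1 : A) + P.dag) := by rw [he1]
          _ = 1 + P.dag := hde
      refine ⟨?_, Or.inl he1⟩
      calc ((1 : A) + P.dag) + ((1 : A) + P.dag)
          = ((1 : A) + P.dag + 1) + P.dag := by ring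
        _ = (1 : A) + P.dag + P.dag := by rw [he1]
        _ = 1 + P.dag := hed
  refine ⟨key.1, key.2, ?_⟩
  calc (((1 : A) + P.dag) + 1) * ((1 : A) + P.dag)
      = ((1 : A) + P.dag + P.dag * ((1 : A) + P.dag)) + ((1 : A) + P.dag) := by ring
    _ = (((1 : A) + P.dag) + ((1 : A) + P.dag)) + ((1 : A) + P.dag) := by rw [hde]
    _ = (1 : A) + P.dag := by rw [key.1, key.1]
end

section
/- Uniform presentation theorem: For any metatangible pair (A, A₀), every nonzero element c ∈ A of height m_c admits a presentation with some c_T ∈ T such that: if (A,A₀) is of the first kind then c = m_c · c_T; if (A,A₀) is of the second kind then either c = c_T ∈ T with m_c = 1, or c = c_T° with m_c = 2. -/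
/-- `c` has height `m` over `T`: `c` is a sum of `m` elements of `T`, and of no
fewer. -/
def HasHeight {A : Type*} [AddCommMonoid A] (T : Set A) (c : A) (m : ℕ) : Prop :=
  (∃ l : List A, l.length = m ∧ (∀ x ∈ l, x ∈ T) ∧ l.sum = c) ∧
  ∀ k : ℕ, (∃ l : List A, l.length = k ∧ (∀ x ∈ l, x ∈ T) ∧ l.sum = c) → m ≤ k


private lemma sum_replace {A : Type*} [AddCommMonoid A] (a : A) :
    ∀ t : List A, (∀ x ∈ t, a + x = a + a) → a + t.sum = a + t.length • a := by
  intro t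
  induction t with
  | nil => simp
  | cons x s ih =>
    intro h
    have hx : a + x = a + a := h x (by simp)
    have hs := ih (fun y hy => h y (by simp [hy]))
    simp only [List.sum_cons, List.length_cons]
    calc a + (x + s.sum) = (a + x) + s.sum := by abel
      _ = (a + a) + s.sum := by rw [hx]
      _ = a + (a + s.sum) := by abel
      _ = a + (a + s.length • a) := by rw [hs]
      _ = a + (s.length + 1) • a := by rw [succ_nsmul]; abel

/-- Uniform presentation theorem: in a metatangible pair, every nonzero `c ∈ A`
of height `m_c` has a presentation with some `c_T ∈ T`: for the first kind
(`𝟙† = 𝟙`, `𝟙 + 𝟙 ∈ A₀`), `c = m_c · c_T`; for the second kind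
(`a + a ∉ A₀` for all tangible `a`), either `c = c_T ∈ T` with `m_c = 1` or
`c = c_T° = c_T·(𝟙 + 𝟙†)` with `m_c = 2`. -/
theorem uniform_presentation {A : Type*} [AddCommMonoid A] [Mul A] [One A]
    (P : MetaPair A) (c : A) (hc : c ≠ 0) (m : ℕ) (hm : HasHeight P.T c m) :
    ((P.dag = 1 ∧ (1 : A) + 1 ∈ P.A0) →
        ∃ cT : A, cT ∈ P.T ∧ c = m • cT) ∧
    ((∀ a : A, a ∈ P.T → a + a ∉ P.A0) →
        ∃ cT : A, cT ∈ P.T ∧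
          ((c = cT ∧ m = 1) ∨ (c = cT * (1 + P.dag) ∧ m = 2))) := by
  obtain ⟨⟨l, hlen, hT, hsum⟩, hmin⟩ := hm
  have hm0 : m ≠ 0 := by
    rintro rfl
    rw [List.length_eq_zero_iff] at hlen
    subst hlen
    exact hc hsum.symm
  -- merging lemma: any adjacent pair in a presentation of c must lie in A0
  have hmerge : ∀ a b : A, ∀ rest : List A, a ∈ P.T → b ∈ P.T →
      (∀ x ∈ rest, x ∈ P.T) → rest.length + 2 = m → a + (b + rest.sum) = c →
      a + b ∈ P.A0 := by
    intro a b rest ha hb hrest hlen' hsum'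
    rcases P.metatangible a b ha hb with hT' | h0
    · exfalso
      have := hmin (rest.length + 1)
        ⟨(a + b) :: rest, by simp, by
          intro x hx
          rcases List.mem_cons.mp hx with rfl | hx
          · exact hT'
          · exact hrest x hx, by
          simp only [List.sum_cons]
          rw [← hsum']; abel⟩
      omega
    · exact h0
  constructor
  · -- first kind
    rintro ⟨hdag, -⟩
    cases l with
    | nil => exact absurd hlen.symm hm0
    | cons a t =>
      have ha : a ∈ P.T := hT a (by simp)
      refine ⟨a, ha, ?_⟩
      have hax : ∀ x ∈ t, a + x = a + a := by
        intro x hx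
        obtain ⟨t₁, t₂, rfl⟩ := List.append_of_mem hx
        have hxT : x ∈ P.T := hT x (by simp)
        have h0 : a + x ∈ P.A0 := by
          refine hmerge a x (t₁ ++ t₂) ha hxT ?_ ?_ ?_
          · intro y hy
            refine hT y ?_
            simp only [List.mem_cons, List.mem_append] at hy ⊢
            tauto
          · simp only [List.length_cons, List.length_append] at hlen ⊢
            omega
          · rw [← hsum]
            simp only [List.sum_cons, List.sum_append]
            abel
        have := P.propN a x ha hxT h0
        rw [this, hdag, P.left_distrib' a 1 1 ha, P.mul_one']
      have key : a + t.sum = a + t.length • a := sum_replace a t hax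
      have hm' : m = t.length + 1 := by
        simp only [List.length_cons] at hlen; omega
      rw [← hsum]
      simp only [List.sum_cons]
      rw [key, hm', succ_nsmul]
      abel
  · -- second kind
    intro hsec
    rcases m with - | - | - | n
    · exact absurd rfl hm0
    · -- m = 1
      obtain ⟨x, rfl⟩ := List.length_eq_one_iff.mp hlen
      refine ⟨x, hT x (by simp), Or.inl ⟨?_, rfl⟩⟩
      rw [← hsum]; simp
    · -- m = 2
      obtain ⟨a, b, rfl⟩ := List.length_eq_two.mp hlen
      have ha : a ∈ P.T := hT a (by simp)
      have hb : b ∈ P.T := hT b (by simp)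
      have h0 : a + b ∈ P.A0 := by
        refine hmerge a b [] ha hb (by simp) (by simp) ?_
        rw [← hsum]; simp
      refine ⟨a, ha, Or.inr ⟨?_, rfl⟩⟩
      rw [← hsum]
      simp only [List.sum_cons, List.sum_nil, add_zero]
      exact P.propN a b ha hb h0
    · -- m = n + 3 : impossible
      exfalso
      match l, hlen with
      | a :: b :: d :: rest, hlen =>
      have ha : a ∈ P.T := hT a (by simp)
      have hb : b ∈ P.T := hT b (by simp)
      have hd : d ∈ P.T := hT d (by simp)
      have hrest : ∀ x ∈ rest, x ∈ P.T := fun x hx => hT x (by simp [hx])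
      have hlr : rest.length + 3 = n + 3 := by
        simpa using hlen
      have hsum' : a + (b + (d + rest.sum)) = c := by
        rw [← hsum]; simp
      have hab : a + b ∈ P.A0 := by
        refine hmerge a b (d :: rest) ha hb ?_ ?_ ?_
        · intro x hx
          rcases List.mem_cons.mp hx with rfl | hx
          · exact hd
          · exact hrest x hx
        · simp; omega
        · simpa using hsum'
      have hbd : b + d ∈ P.A0 := by
        refine hmerge b d (a :: rest) hb hd ?_ ?_ ?_
        · intro x hx
          rcases List.mem_cons.mp hx with rfl | hx
          · exact ha
          · exact hrest x hx
        · simp; omega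
        · rw [← hsum']
          simp only [List.sum_cons]
          abel
      have hba : b + a ∈ P.A0 := by rwa [add_comm] at hab
      have e1 : b + a = b + b * P.dag := by
        rw [P.propN b a hb ha hba, P.left_distrib' b 1 P.dag hb, P.mul_one']
      have e2 : b + d = b + b * P.dag := by
        rw [P.propN b d hb hd hbd, P.left_distrib' b 1 P.dag hb, P.mul_one']
      have hbdT : b * P.dag ∈ P.T := P.T_mul b P.dag hb P.dag_mem
      have hsT : b * P.dag + b * P.dag ∈ P.T :=
        (P.metatangible _ _ hbdT hbdT).resolve_right (hsec _ hbdT)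
      have hsum2 : b + ((b * P.dag + b * P.dag) + rest.sum) = c := by
        calc b + ((b * P.dag + b * P.dag) + rest.sum)
            = (b + b * P.dag) + (b * P.dag + rest.sum) := by abel
          _ = (b + d) + (b * P.dag + rest.sum) := by rw [← e2]
          _ = (b + b * P.dag) + (d + rest.sum) := by abel
          _ = (b + a) + (d + rest.sum) := by rw [← e1]
          _ = a + (b + (d + rest.sum)) := by abel
          _ = c := hsum'
      have := hmin (rest.length + 2)
        ⟨b :: (b * P.dag + b * P.dag) :: rest, by simp, by
          intro x hx
          rcases List.mem_cons.mp hx with rfl | hx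
          · exact hb
          · rcases List.mem_cons.mp hx with rfl | hx
            · exact hsT
            · exact hrest x hx, by simpa using hsum2⟩
      omega
end

section
/- Let (A, A₀) be a metatangible gp-pair (T a multiplicative group) that fails weak Property N, i.e., there is no a ∈ T with 𝟙 + a ∈ A₀. Then A₀ = {0}, A = T ∪ {0}, and A lacks zero sums (a sum of elements of T is never 0). -/
/-- Let `(A, A₀)` be a weakly metatangible gp-pair (`T` a multiplicative group)
failing weak Property N: there is no `a ∈ T` with `𝟙 + a ∈ A₀`. Then
`A₀ = {0}`, `A = T ∪ {0}`, and `A` lacks zero sums. -/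
theorem fails_weak_propN {A : Type*} [AddCommMonoid A] [Mul A] [One A]
    (P : NdPair A)
    (hmeta : ∀ a b : A, a ∈ P.T → b ∈ P.T → a + b ∈ P.T ∨ a + b ∈ P.A0)
    (hgrp : ∀ a : A, a ∈ P.T → ∃ b : A, b ∈ P.T ∧ a * b = 1 ∧ b * a = 1)
    (habs : ∀ a x : A, a ∈ P.T → a * x ∈ P.A0 → x ∈ P.A0)
    (hfail : ¬ ∃ a : A, a ∈ P.T ∧ (1 : A) + a ∈ P.A0) :
    (∀ x : A, x ∈ P.A0 → x = 0) ∧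
    (∀ b : A, b ∈ P.T ∨ b = 0) ∧
    (∀ l : List A, (∀ x ∈ l, x ∈ P.T ∨ x = 0) → l.sum = 0 → ∀ x ∈ l, x = 0) := by
  -- 0 ∉ T
  have hzero : (0 : A) ∉ P.T := by
    intro h0
    obtain ⟨b, hb, hab, _⟩ := hgrp 0 h0
    rw [P.zero_mul'] at hab
    exact hfail ⟨0, h0, by rw [← hab]; simpa [P.zero_mul'] using P.zero_mem_A0⟩
  -- sum of two tangibles is tangible
  have hsumT : ∀ a b : A, a ∈ P.T → b ∈ P.T → a + b ∈ P.T := by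
    intro a b ha hb
    rcases hmeta a b ha hb with h | h
    · exact h
    · exfalso
      obtain ⟨c, hc, hac, hca⟩ := hgrp a ha
      apply hfail
      refine ⟨c * b, P.T_mul c b hc hb, ?_⟩
      have := P.A0_mul_left c (a + b) hc h
      rwa [P.left_distrib' c a b hc, hca] at this
  -- key : lists of T∪{0} elements sum into T or are all zero
  have key : ∀ l : List A, (∀ x ∈ l, x ∈ P.T ∨ x = 0) →
      l.sum ∈ P.T ∨ (l.sum = 0 ∧ ∀ x ∈ l, x = 0) := by
    intro l
    induction l with
    | nil => intro _; exact Or.inr ⟨rfl, by simp⟩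
    | cons a l ih =>
      intro h
      have ha := h a (by simp)
      have hl := ih (fun x hx => h x (by simp [hx]))
      rcases ha with ha | ha
      · rcases hl with hl | ⟨hl0, _⟩
        · exact Or.inl (by simpa using hsumT a l.sum ha hl)
        · exact Or.inl (by simpa [hl0] using ha)
      · rcases hl with hl | ⟨hl0, hall⟩
        · exact Or.inl (by simpa [ha] using hl)
        · refine Or.inr ⟨by simp [ha, hl0], ?_⟩
          intro x hx
          rcases List.mem_cons.mp hx with h | h
          · exact h ▸ ha
          · exact hall x h
  have claim2 : ∀ b : A, b ∈ P.T ∨ b = 0 := by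
    intro b
    obtain ⟨l, hl, hsum⟩ := P.spanned b
    rcases key l (fun x hx => Or.inl (hl x hx)) with h | ⟨h, _⟩
    · exact Or.inl (hsum ▸ h)
    · exact Or.inr (hsum ▸ h)
  refine ⟨?_, claim2, ?_⟩
  · intro x hx
    rcases claim2 x with h | h
    · exact P.A0_inter_T x hx h
    · exact h
  · intro l hl hsum
    rcases key l hl with h | ⟨_, hall⟩
    · exact absurd (hsum ▸ h) hzero
    · exact hall
end

section
/- Let (A, A₀, (−)) be a uniquely negated metatangible triple. Then (A, A₀) is N-transitive: if aᵢ + a_{i+1} ∈ A₀ for tangible a₁, a₂, a₃, a₄ (i = 1,2,3), then a₁ + a₄ ∈ A₀. -/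
/-- A triple: a pair equipped with a negation map `neg`, an additive
automorphism of order at most `2` respecting the `T`-action, with
`𝟙 + (−)𝟙 ∈ A₀`. -/
structure Triple (A : Type*) [AddCommMonoid A] [Mul A] [One A] extends NdPair A where
  neg : A → A
  neg_add : ∀ b c : A, neg (b + c) = neg b + neg c
  neg_invol : ∀ b : A, neg (neg b) = b
  neg_one_mem : neg 1 ∈ T
  one_add_neg_one : (1 : A) + neg 1 ∈ A0
  neg_left : ∀ a b : A, a ∈ T → (neg a) * b = neg (a * b)
  neg_mid : ∀ a b : A, a ∈ T → a * (neg b) = neg (a * b)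
  neg_right : ∀ a b : A, a ∈ T → (neg b) * a = neg (b * a)
  neg_mid' : ∀ a b : A, a ∈ T → b * (neg a) = neg (b * a)

/-- A uniquely negated metatangible triple is N-transitive: if
`aᵢ + a_{i+1} ∈ A₀` for tangibles `a₁, a₂, a₃, a₄` (`i = 1,2,3`), then
`a₁ + a₄ ∈ A₀`. -/
theorem uniquely_negated_N_transitive {A : Type*} [AddCommMonoid A] [Mul A] [One A]
    (P : Triple A)
    (hmeta : ∀ a b : A, a ∈ P.T → b ∈ P.T → a + b ∈ P.T ∨ a + b ∈ P.A0)
    (hpropN : ∀ a b : A, a ∈ P.T → b ∈ P.T → a + b ∈ P.A0 →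
        a + b = a * (1 + P.neg 1))
    (huniq : ∀ a b : A, a ∈ P.T → a + b ∈ P.A0 → b = P.neg a) :
    ∀ a₁ a₂ a₃ a₄ : A, a₁ ∈ P.T → a₂ ∈ P.T → a₃ ∈ P.T → a₄ ∈ P.T →
      a₁ + a₂ ∈ P.A0 → a₂ + a₃ ∈ P.A0 → a₃ + a₄ ∈ P.A0 → a₁ + a₄ ∈ P.A0 := by
  intro a₁ a₂ a₃ a₄ h1 h2 h3 h4 h12 h23 h34
  have e2 : a₂ = P.neg a₁ := huniq _ _ h1 h12
  have e3 : a₃ = P.neg a₂ := huniq _ _ h2 h23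
  have e4 : a₄ = P.neg a₃ := huniq _ _ h3 h34
  have : a₄ = a₂ := by rw [e4, e3, e2, P.neg_invol]
  rwa [this]
end

section
/- Let (A, A₀, (−)) be a uniquely negated metatangible triple of the second kind. For b₁, b₂ ∈ A: if b₁ + (−)b₂ ∈ A₀ then b₁ ∇ b₂ (b₁ tangibly balances b₂, i.e., there exists a ∈ T ∪ {0} with b₁ + a ∈ A₀ and b₂ + a ∈ A₀). Conversely, if b₁ ∇ b₂, then either b₁, b₂ ∈ A₀ or b₁ + (−)b₂ ∈ A₀. -/
section Aux

variable {A : Type*} [AddCommMonoid A] [Mul A] [One A] (P : Triple A)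

lemma Triple.neg_zero' : P.neg 0 = 0 := by
  have h1 : P.neg 1 * 0 = P.neg (1 * 0) := P.neg_left 1 0 P.one_mem
  rw [P.mul_zero', P.mul_zero'] at h1
  exact h1.symm

lemma Triple.neg_mem {a : A} (ha : a ∈ P.T) : P.neg a ∈ P.T := by
  have h1 : P.neg 1 * a = P.neg (1 * a) := P.neg_left 1 a P.one_mem
  rw [P.one_mul'] at h1
  rw [← h1]
  exact P.T_mul _ _ P.neg_one_mem ha

lemma Triple.circ_mem {a : A} (ha : a ∈ P.T) : a + P.neg a ∈ P.A0 := by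
  have h1 : a * (1 + P.neg 1) ∈ P.A0 := P.A0_mul_left _ _ ha P.one_add_neg_one
  have h2 : a * (1 + P.neg 1) = a + P.neg a := by
    rw [P.left_distrib' a 1 (P.neg 1) ha, P.mul_one', P.neg_mid' 1 a P.one_mem, P.mul_one']
  rwa [h2] at h1

variable (hmeta : ∀ a b : A, a ∈ P.T → b ∈ P.T → a + b ∈ P.T ∨ a + b ∈ P.A0)
  (huniq : ∀ a b : A, a ∈ P.T → a + b ∈ P.A0 → b = P.neg a)
  (hsecond : ∀ a : A, a ∈ P.T → a + a ∉ P.A0)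

include hmeta huniq hsecond in
lemma Triple.uniform : ∀ b : A, b ∈ P.T ∨ b = 0 ∨ ∃ c ∈ P.T, b = c + P.neg c := by
  intro b
  obtain ⟨l, hl, hsum⟩ := P.spanned b
  subst hsum
  induction l with
  | nil => right; left; simp
  | cons a l ih =>
    have ha : a ∈ P.T := hl a (by simp)
    have hl' : ∀ x ∈ l, x ∈ P.T := fun x hx => hl x (by simp [hx])
    rw [List.sum_cons]
    rcases ih hl' with hs | hs | ⟨c, hc, hs⟩
    · rcases hmeta a l.sum ha hs with h | h
      · left; exact h
      · right; right
        exact ⟨a, ha, by rw [← huniq a l.sum ha h]⟩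
    · left; rw [hs, add_zero]; exact ha
    · rw [hs]
      rcases hmeta a c ha hc with hac | hac
      · rcases hmeta (a + c) (P.neg c) hac (P.neg_mem hc) with h | h
        · left; rw [← add_assoc]; exact h
        · have h2 : P.neg c = P.neg (a + c) := huniq (a + c) (P.neg c) hac h
          have h3 : c = a + c := by
            have h4 := congrArg P.neg h2
            rwa [P.neg_invol, P.neg_invol] at h4
          right; right
          exact ⟨c, hc, by rw [← add_assoc, ← h3]⟩
      · have hca : c = P.neg a := huniq a c ha hac
        have haa : a + a ∈ P.T := by
          rcases hmeta a a ha ha with h | h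
          · exact h
          · exact absurd h (hsecond a ha)
        rcases hmeta (a + a) (P.neg a) haa (P.neg_mem ha) with h | h
        · left
          have e : a + (c + P.neg c) = a + a + P.neg a := by
            rw [hca, P.neg_invol]; abel
          rw [e]; exact h
        · have h2 : P.neg a = P.neg (a + a) := huniq (a + a) (P.neg a) haa h
          have h3 : a = a + a := by
            have h4 := congrArg P.neg h2
            rwa [P.neg_invol, P.neg_invol] at h4
          right; right
          refine ⟨a, ha, ?_⟩
          rw [hca, P.neg_invol, show a + (P.neg a + a) = a + a + P.neg a from by abel, ← h3]

include hmeta huniq hsecond in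
lemma Triple.null_form {x : A} (hx : x ∈ P.A0) : x = 0 ∨ ∃ c ∈ P.T, x = c + P.neg c := by
  rcases P.uniform hmeta huniq hsecond x with h | h | h
  · exact Or.inl (P.A0_inter_T x hx h)
  · exact Or.inl h
  · exact Or.inr h

include hmeta huniq hsecond in
lemma Triple.neg_A0 {x : A} (hx : x ∈ P.A0) : P.neg x ∈ P.A0 := by
  rcases P.null_form hmeta huniq hsecond hx with h | ⟨c, hc, h⟩
  · rw [h, P.neg_zero']; exact P.zero_mem_A0
  · rw [h, P.neg_add, P.neg_invol, add_comm]
    exact P.circ_mem hc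

end Aux

/-- In a uniquely negated metatangible triple of the second kind: for
`b₁, b₂ ∈ A`, if `b₁ + (−)b₂ ∈ A₀` then `b₁ ∇ b₂` (there is `a ∈ T ∪ {0}`
with `b₁ + a ∈ A₀` and `b₂ + a ∈ A₀`); conversely, if `b₁ ∇ b₂` then either
`b₁, b₂ ∈ A₀` or `b₁ + (−)b₂ ∈ A₀`. -/
theorem balance_iff_neg_sum_null {A : Type*} [AddCommMonoid A] [Mul A] [One A]
    (P : Triple A)
    (hmeta : ∀ a b : A, a ∈ P.T → b ∈ P.T → a + b ∈ P.T ∨ a + b ∈ P.A0)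
    (hpropN : ∀ a b : A, a ∈ P.T → b ∈ P.T → a + b ∈ P.A0 →
        a + b = a * (1 + P.neg 1))
    (huniq : ∀ a b : A, a ∈ P.T → a + b ∈ P.A0 → b = P.neg a)
    (hsecond : ∀ a : A, a ∈ P.T → a + a ∉ P.A0) :
    ∀ b₁ b₂ : A,
      (b₁ + P.neg b₂ ∈ P.A0 →
        ∃ a : A, (a ∈ P.T ∨ a = 0) ∧ b₁ + a ∈ P.A0 ∧ b₂ + a ∈ P.A0) ∧
      ((∃ a : A, (a ∈ P.T ∨ a = 0) ∧ b₁ + a ∈ P.A0 ∧ b₂ + a ∈ P.A0) →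
        (b₁ ∈ P.A0 ∧ b₂ ∈ P.A0) ∨ b₁ + P.neg b₂ ∈ P.A0) := by
  intro b₁ b₂
  constructor
  · -- forward direction
    intro h
    rcases P.uniform hmeta huniq hsecond b₂ with h2 | h2 | ⟨c, hc, h2⟩
    · exact ⟨P.neg b₂, Or.inl (P.neg_mem h2), h, P.circ_mem h2⟩
    · refine ⟨0, Or.inr rfl, ?_, ?_⟩
      · rw [add_zero]
        rwa [h2, P.neg_zero', add_zero] at h
      · rw [h2, add_zero]; exact P.zero_mem_A0
    · have hb2A0 : b₂ ∈ P.A0 := by rw [h2]; exact P.circ_mem hc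
      have hnb2 : P.neg b₂ = b₂ := by rw [h2, P.neg_add, P.neg_invol, add_comm]
      have hb : b₁ + b₂ ∈ P.A0 := by rwa [hnb2] at h
      rcases P.uniform hmeta huniq hsecond b₁ with h1 | h1 | ⟨d, hd, h1⟩
      · -- b₁ tangible
        have hclaim : b₂ + P.neg b₁ ∈ P.A0 := by
          have hb' : b₁ + (c + P.neg c) ∈ P.A0 := by rwa [h2] at hb
          rcases hmeta b₁ c h1 hc with hbc | hbc
          · rw [← add_assoc] at hb'
            have h2' : P.neg c = P.neg (b₁ + c) := huniq (b₁ + c) (P.neg c) hbc hb'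
            have h3 : c = b₁ + c := by
              have h4 := congrArg P.neg h2'
              rwa [P.neg_invol, P.neg_invol] at h4
            have key : b₂ + P.neg b₁ = (b₁ + P.neg b₁) + (c + P.neg c) := by
              rw [h2]
              nth_rewrite 1 [h3]
              abel
            rw [key]
            exact P.A0_add _ _ (P.circ_mem h1) (P.circ_mem hc)
          · have hca : c = P.neg b₁ := huniq b₁ c h1 hbc
            have haa : b₁ + b₁ ∈ P.T := by
              rcases hmeta b₁ b₁ h1 h1 with hh | hh
              · exact hh
              · exact absurd hh (hsecond b₁ h1)
            have hbb : b₁ + b₁ + P.neg b₁ ∈ P.A0 := by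
              have e : b₁ + b₂ = b₁ + b₁ + P.neg b₁ := by
                rw [h2, hca, P.neg_invol]; abel
              rwa [e] at hb
            have h4 : P.neg b₁ = P.neg (b₁ + b₁) := huniq (b₁ + b₁) (P.neg b₁) haa hbb
            have h5 : b₁ = b₁ + b₁ := by
              have h6 := congrArg P.neg h4
              rwa [P.neg_invol, P.neg_invol] at h6
            have e : b₂ + P.neg b₁ = (P.neg b₁ + P.neg b₁) + b₁ := by
              rw [h2, hca, P.neg_invol]; abel
            have e2 : P.neg b₁ + P.neg b₁ = P.neg b₁ := by
              rw [← P.neg_add, ← h5]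
            rw [e, e2, add_comm]
            exact P.circ_mem h1
        exact ⟨P.neg b₁, Or.inl (P.neg_mem h1), P.circ_mem h1, hclaim⟩
      · refine ⟨0, Or.inr rfl, ?_, ?_⟩
        · rw [add_zero, h1]; exact P.zero_mem_A0
        · rw [add_zero]; exact hb2A0
      · refine ⟨0, Or.inr rfl, ?_, ?_⟩
        · rw [add_zero, h1]; exact P.circ_mem hd
        · rw [add_zero]; exact hb2A0
  · -- converse direction
    rintro ⟨a, ha | rfl, h1, h2⟩
    · rcases P.uniform hmeta huniq hsecond b₁ with hb1 | hb1 | ⟨d, hd, hb1⟩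
      · -- b₁ tangible
        have haeq : a = P.neg b₁ := huniq b₁ a hb1 h1
        have h2' : b₂ + P.neg b₁ ∈ P.A0 := haeq ▸ h2
        right
        have h3 := P.neg_A0 hmeta huniq hsecond h2'
        rw [P.neg_add, P.neg_invol] at h3
        rwa [add_comm] at h3
      · -- b₁ = 0
        have hb1A0 : b₁ ∈ P.A0 := by rw [hb1]; exact P.zero_mem_A0
        rcases P.uniform hmeta huniq hsecond b₂ with hb2 | hb2 | ⟨c, hc, hb2⟩
        · right
          rw [← huniq b₂ a hb2 h2]
          exact h1
        · exact Or.inl ⟨hb1A0, by rw [hb2]; exact P.zero_mem_A0⟩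
        · exact Or.inl ⟨hb1A0, by rw [hb2]; exact P.circ_mem hc⟩
      · -- b₁ = d + neg d
        have hb1A0 : b₁ ∈ P.A0 := by rw [hb1]; exact P.circ_mem hd
        rcases P.uniform hmeta huniq hsecond b₂ with hb2 | hb2 | ⟨c, hc, hb2⟩
        · right
          rw [← huniq b₂ a hb2 h2]
          exact h1
        · exact Or.inl ⟨hb1A0, by rw [hb2]; exact P.zero_mem_A0⟩
        · exact Or.inl ⟨hb1A0, by rw [hb2]; exact P.circ_mem hc⟩
    · left
      rw [add_zero] at h1 h2
      exact ⟨h1, h2⟩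
end

section
/- Let (A, A₀) be an N-transitive pair. If a₁ ∇ a₂ and a₁' ∇ a₂' for tangibles a₁, a₂, a₁', a₂' ∈ T, then (a₁ + a₁') ∇ (a₂ + a₂') and (a₁·a₁') ∇ (a₂·a₂'). Moreover ∇ is transitive on T. -/
/-- Tangible balancing: `x ∇ y` iff there is `c ∈ T ∪ {0}` with `x + c ∈ A₀`
and `y + c ∈ A₀`. -/
def Nabla {A : Type*} [AddCommMonoid A] [Mul A] [One A] (P : NdPair A)
    (x y : A) : Prop :=
  ∃ c : A, (c ∈ P.T ∨ c = 0) ∧ x + c ∈ P.A0 ∧ y + c ∈ P.A0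

section AuxNabla

variable {A : Type*} [AddCommMonoid A] [Mul A] [One A] (P : PropNPair A)

/-- For any tangible `a`, `a + a·dag = a·(1 + dag) ∈ A₀`. -/
lemma aux_e_self {a : A} (ha : a ∈ P.T) : a + a * P.dag ∈ P.A0 := by
  have h := P.A0_mul_left a (1 + P.dag) ha P.e_mem
  rwa [P.left_distrib' a 1 P.dag ha, P.mul_one'] at h

/-- Key: in an N-transitive pair, `a ∇ b` for tangibles implies `a + b·dag ∈ A₀`. -/
lemma aux_key
    (hNtrans : ∀ a₁ a₂ a₃ a₄ : A, a₁ ∈ P.T → a₂ ∈ P.T → a₃ ∈ P.T → a₄ ∈ P.T →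
        a₁ + a₂ ∈ P.A0 → a₂ + a₃ ∈ P.A0 → a₃ + a₄ ∈ P.A0 → a₁ + a₄ ∈ P.A0)
    {a b : A} (ha : a ∈ P.T) (hb : b ∈ P.T)
    (h : Nabla P.toNdPair a b) : a + b * P.dag ∈ P.A0 := by
  obtain ⟨c, hc, hac, hbc⟩ := h
  rcases hc with hcT | rfl
  · refine hNtrans a c (c * P.dag) (b * P.dag) ha hcT
      (P.T_mul _ _ hcT P.dag_mem) (P.T_mul _ _ hb P.dag_mem) hac
      (aux_e_self P hcT) ?_
    have h2 := P.A0_mul_right P.dag (b + c) P.dag_mem hbc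
    rw [P.right_distrib' P.dag b c P.dag_mem] at h2
    rwa [add_comm] at h2
  · rw [add_zero] at hac hbc
    have ha0 : a = 0 := P.A0_inter_T a hac ha
    have hb0 : b = 0 := P.A0_inter_T b hbc hb
    rw [ha0, hb0, P.zero_mul', add_zero]
    exact P.zero_mem_A0

lemma aux_nabla_symm {x y : A} (h : Nabla P.toNdPair x y) : Nabla P.toNdPair y x := by
  obtain ⟨c, h1, h2, h3⟩ := h; exact ⟨c, h1, h3, h2⟩

end AuxNabla

/-- In an N-transitive pair: if `a₁ ∇ a₂` and `a₁' ∇ a₂'` for tangibles, then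
`(a₁ + a₁') ∇ (a₂ + a₂')` and `(a₁·a₁') ∇ (a₂·a₂')`; moreover `∇` is
transitive on `T`. -/
theorem nabla_congruence {A : Type*} [AddCommMonoid A] [Mul A] [One A]
    (P : PropNPair A)
    (hcommT : ∀ a b : A, a ∈ P.T → b ∈ P.T → a * b = b * a)
    (hmeta : ∀ a b : A, a ∈ P.T → b ∈ P.T → a + b ∈ P.T ∨ a + b ∈ P.A0)
    (habs : ∀ a x : A, a ∈ P.T → a * x ∈ P.A0 → x ∈ P.A0)
    (hNtrans : ∀ a₁ a₂ a₃ a₄ : A, a₁ ∈ P.T → a₂ ∈ P.T → a₃ ∈ P.T → a₄ ∈ P.T →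
        a₁ + a₂ ∈ P.A0 → a₂ + a₃ ∈ P.A0 → a₃ + a₄ ∈ P.A0 → a₁ + a₄ ∈ P.A0) :
    (∀ a₁ a₂ a₁' a₂' : A, a₁ ∈ P.T → a₂ ∈ P.T → a₁' ∈ P.T → a₂' ∈ P.T →
        Nabla P.toNdPair a₁ a₂ → Nabla P.toNdPair a₁' a₂' →
        Nabla P.toNdPair (a₁ + a₁') (a₂ + a₂') ∧
        Nabla P.toNdPair (a₁ * a₁') (a₂ * a₂')) ∧
    (∀ a b c : A, a ∈ P.T → b ∈ P.T → c ∈ P.T →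
        Nabla P.toNdPair a b → Nabla P.toNdPair b c → Nabla P.toNdPair a c) := by
  set d := P.dag with hd
  have hdT : d ∈ P.T := P.dag_mem
  constructor
  · intro a₁ a₂ a₁' a₂' h1 h2 h3 h4 hn hn'
    have k1 := aux_key P hNtrans h1 h2 hn
    have k2 := aux_key P hNtrans h2 h1 (aux_nabla_symm P hn)
    have k1' := aux_key P hNtrans h3 h4 hn'
    have k2' := aux_key P hNtrans h4 h3 (aux_nabla_symm P hn')
    constructor
    · -- addition
      have hd1 : (a₁ + a₁') + (a₂ + a₂') * d ∈ P.A0 := by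
        have h := P.A0_add _ _ k1 k1'
        have heq : (a₁ + a₂ * d) + (a₁' + a₂' * d)
            = (a₁ + a₁') + (a₂ + a₂') * d := by
          rw [P.right_distrib' d a₂ a₂' hdT]
          abel
        rwa [heq] at h
      have hd2 : (a₂ + a₂') + (a₁ + a₁') * d ∈ P.A0 := by
        have h := P.A0_add _ _ k2 k2'
        have heq : (a₂ + a₁ * d) + (a₂' + a₁' * d)
            = (a₂ + a₂') + (a₁ + a₁') * d := by
          rw [P.right_distrib' d a₁ a₁' hdT]
          abel
        rwa [heq] at h
      rcases hmeta a₂ a₂' h2 h4 with hs2 | hs2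
      · exact ⟨(a₂ + a₂') * d, Or.inl (P.T_mul _ _ hs2 hdT), hd1, aux_e_self P hs2⟩
      · rcases hmeta a₁ a₁' h1 h3 with hs1 | hs1
        · exact ⟨(a₁ + a₁') * d, Or.inl (P.T_mul _ _ hs1 hdT), aux_e_self P hs1, hd2⟩
        · exact ⟨0, Or.inr rfl, by rwa [add_zero], by rwa [add_zero]⟩
    · -- multiplication
      have hrw1 : (a₂ * d) * a₁' = (a₂ * a₁') * d := by
        rw [P.assoc_mid a₂ a₁' d h2 h3, hcommT d a₁' hdT h3,
          P.assoc_left a₂ a₁' d h2 h3]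
      have hrw2 : (a₂ * d) * a₂' = (a₂ * a₂') * d := by
        rw [P.assoc_mid a₂ a₂' d h2 h4, hcommT d a₂' hdT h4,
          P.assoc_left a₂ a₂' d h2 h4]
      have ht12 : a₁ * a₁' + (a₂ * a₁') * d ∈ P.A0 := by
        have h := P.A0_mul_right a₁' (a₁ + a₂ * d) h3 k1
        rwa [P.right_distrib' a₁' a₁ (a₂ * d) h3, hrw1] at h
      have ht23 : (a₂ * a₁') * d + ((a₂ * a₂') * d) * d ∈ P.A0 := by
        have h := P.A0_mul_left (a₂ * d) (a₁' + a₂' * d)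
          (P.T_mul _ _ h2 hdT) k1'
        rwa [P.left_distrib' (a₂ * d) a₁' (a₂' * d) (P.T_mul _ _ h2 hdT), hrw1,
          P.assoc_left (a₂ * d) a₂' d (P.T_mul _ _ h2 hdT) h4, hrw2] at h
      have ht34 : ((a₂ * a₂') * d) * d + (a₂ * a₂') * d ∈ P.A0 := by
        have h := aux_e_self P (P.T_mul _ _ (P.T_mul _ _ h2 h4) hdT)
        rwa [add_comm] at h
      have hfinal : a₁ * a₁' + (a₂ * a₂') * d ∈ P.A0 :=
        hNtrans (a₁ * a₁') ((a₂ * a₁') * d) (((a₂ * a₂') * d) * d) ((a₂ * a₂') * d)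
          (P.T_mul _ _ h1 h3)
          (P.T_mul _ _ (P.T_mul _ _ h2 h3) hdT)
          (P.T_mul _ _ (P.T_mul _ _ (P.T_mul _ _ h2 h4) hdT) hdT)
          (P.T_mul _ _ (P.T_mul _ _ h2 h4) hdT)
          ht12 ht23 ht34
      exact ⟨(a₂ * a₂') * d, Or.inl (P.T_mul _ _ (P.T_mul _ _ h2 h4) hdT),
        hfinal, aux_e_self P (P.T_mul _ _ h2 h4)⟩
  · -- transitivity
    intro a b c ha hb hc hab hbc
    have kab : a + b * d ∈ P.A0 := aux_key P hNtrans ha hb hab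
    have kcb : c + b * d ∈ P.A0 := aux_key P hNtrans hc hb (aux_nabla_symm P hbc)
    have kcc : c + c * d ∈ P.A0 := aux_e_self P hc
    have hfinal : a + c * d ∈ P.A0 :=
      hNtrans a (b * d) c (c * d) ha (P.T_mul _ _ hb hdT) hc
        (P.T_mul _ _ hc hdT) kab (by rwa [add_comm] at kcb) kcc
    exact ⟨c * d, Or.inl (P.T_mul _ _ hc hdT), hfinal, kcc⟩
end

section
/- Krasner quotient construction: Let R be a commutative semiring and G a subgroup of the multiplicative monoid of R. Then on the set R/G of multiplicative cosets bG, the hyperaddition b₁G ⊞ b₂G := {(a₁+a₂)G : a₁ ∈ b₁G, a₂ ∈ b₂G} is associative: (b₁G ⊞ b₂G) ⊞ b₃G = b₁G ⊞ (b₂G ⊞ b₃G), where the operation is extended to sets elementwise. -/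
/-- The multiplicative coset `bG = {b·g : g ∈ G}` of `b` in a commutative
semiring `R`. -/
def coset {R : Type*} [CommSemiring R] (G : Set R) (b : R) : Set R :=
  {x | ∃ g ∈ G, x = b * g}

/-- The hyperaddition of two cosets (given as subsets of `R`):
`C ⊞ D = {(c + d)G : c ∈ C, d ∈ D}`, a set of cosets. -/
def hadd1 {R : Type*} [CommSemiring R] (G : Set R) (C D : Set R) : Set (Set R) :=
  {S | ∃ c ∈ C, ∃ d ∈ D, S = coset G (c + d)}

/-- Elementwise extension of the coset hyperaddition to sets of cosets. -/
def haddS {R : Type*} [CommSemiring R] (G : Set R) (X Y : Set (Set R)) :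
    Set (Set R) :=
  {S | ∃ C ∈ X, ∃ D ∈ Y, S ∈ hadd1 G C D}

lemma coset_mul_eq {R : Type*} [CommSemiring R] (G : Set R)
    (hmul : ∀ g h : R, g ∈ G → h ∈ G → g * h ∈ G)
    (hinv : ∀ g ∈ G, ∃ h ∈ G, g * h = 1)
    (x g : R) (hg : g ∈ G) : coset G (x * g) = coset G x := by
  ext y
  constructor
  · rintro ⟨k, hk, rfl⟩
    exact ⟨g * k, hmul g k hg hk, by ring⟩
  · rintro ⟨k, hk, rfl⟩
    obtain ⟨h, hh, hgh⟩ := hinv g hg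
    refine ⟨h * k, hmul h k hh hk, ?_⟩
    calc x * k = x * 1 * k := by ring
    _ = x * (g * h) * k := by rw [hgh]
    _ = x * g * (h * k) := by ring

/-- Krasner quotient construction: for a commutative semiring `R` and a
subgroup `G` of its multiplicative monoid, the hyperaddition
`b₁G ⊞ b₂G = {(a₁+a₂)G : a₁ ∈ b₁G, a₂ ∈ b₂G}` on `R/G` is associative. -/
theorem krasner_hyperaddition_assoc {R : Type*} [CommSemiring R] (G : Set R)
    (hone : (1 : R) ∈ G)
    (hmul : ∀ g h : R, g ∈ G → h ∈ G → g * h ∈ G)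
    (hinv : ∀ g ∈ G, ∃ h ∈ G, g * h = 1)
    (b₁ b₂ b₃ : R) :
    haddS G (haddS G {coset G b₁} {coset G b₂}) {coset G b₃} =
      haddS G {coset G b₁} (haddS G {coset G b₂} {coset G b₃}) := by
  ext S
  simp only [haddS, hadd1, Set.mem_setOf_eq, Set.mem_singleton_iff]
  constructor
  · rintro ⟨C, ⟨C', rfl, D', rfl, c, ⟨g₁, hg₁, rfl⟩, d, ⟨g₂, hg₂, rfl⟩, rfl⟩,
      D, rfl, c', ⟨h, hh, rfl⟩, d', ⟨k, hk, rfl⟩, rfl⟩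
    obtain ⟨h', hh', hhh'⟩ := hinv h hh
    refine ⟨coset G b₁, rfl, coset G (b₂ * g₂ + b₃ * (k * h')),
      ⟨coset G b₂, rfl, coset G b₃, rfl, b₂ * g₂, ⟨g₂, hg₂, rfl⟩,
        b₃ * (k * h'), ⟨k * h', hmul k h' hk hh', rfl⟩, rfl⟩,
      b₁ * g₁, ⟨g₁, hg₁, rfl⟩, (b₂ * g₂ + b₃ * (k * h')) * 1, ⟨1, hone, rfl⟩, ?_⟩
    have e : (b₁ * g₁ + (b₂ * g₂ + b₃ * (k * h')) * 1) * h
        = (b₁ * g₁ + b₂ * g₂) * h + b₃ * k * (h' * h) := by ring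
    rw [← coset_mul_eq G hmul hinv (b₁ * g₁ + (b₂ * g₂ + b₃ * (k * h')) * 1) h hh,
      e, mul_comm h' h, hhh', mul_one]
  · rintro ⟨C, rfl, D, ⟨C', rfl, D', rfl, c, ⟨g₂, hg₂, rfl⟩, d, ⟨g₃, hg₃, rfl⟩, rfl⟩,
      c', ⟨h, hh, rfl⟩, d', ⟨k, hk, rfl⟩, rfl⟩
    obtain ⟨k', hk', hkk'⟩ := hinv k hk
    refine ⟨coset G (b₁ * (h * k') + b₂ * g₂),
      ⟨coset G b₁, rfl, coset G b₂, rfl, b₁ * (h * k'), ⟨h * k', hmul h k' hh hk', rfl⟩,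
        b₂ * g₂, ⟨g₂, hg₂, rfl⟩, rfl⟩,
      coset G b₃, rfl, (b₁ * (h * k') + b₂ * g₂) * 1, ⟨1, hone, rfl⟩,
      b₃ * g₃, ⟨g₃, hg₃, rfl⟩, ?_⟩
    have e : ((b₁ * (h * k') + b₂ * g₂) * 1 + b₃ * g₃) * k
        = b₁ * h * (k' * k) + (b₂ * g₂ + b₃ * g₃) * k := by ring
    rw [← coset_mul_eq G hmul hinv ((b₁ * (h * k') + b₂ * g₂) * 1 + b₃ * g₃) k hk,
      e, mul_comm k' k, hkk', mul_one]
end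

section
/- Let (A, A₀) be an almost regular semiring pair of the strict second kind with 𝟙† ∈ T. The 3×4 matrix with rows v₁ = (𝟙, 𝟙, 𝟙†, 𝟙), v₂ = (𝟙, 𝟙†, 𝟙, 𝟙), v₃ = (𝟙†, 𝟙, 𝟙, 𝟙) has row rank 3: there exist no a₁, a₂, a₃ ∈ T ∪ {0}, not all zero, with a₁v₁ + a₂v₂ + a₃v₃ ∈ A₀^{(4)} (componentwise). -/
/-- Over an almost regular semiring pair of the strict second kind, the `3×4`
matrix with rows `v₁ = (𝟙,𝟙,𝟙†,𝟙)`, `v₂ = (𝟙,𝟙†,𝟙,𝟙)`, `v₃ = (𝟙†,𝟙,𝟙,𝟙)` has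
row rank `3`: no nontrivial `T ∪ {0}`-combination of the rows lies in
`A₀^{(4)}` componentwise. -/
theorem row_rank_three {A : Type*} [CommSemiring A] (P : CSPropNPair A)
    (hstrict : ∀ a a' : A, a ∈ P.T → a' ∈ P.T →
        (∃ c : A, (c ∈ P.T ∨ c = 0) ∧ a + c ∈ P.A0 ∧ a' + c ∈ P.A0) →
        a + a' ∉ P.A0)
    (halmost : ∀ a₁ a₂ a₃ : A, (a₁ ∈ P.T ∨ a₁ = 0) → (a₂ ∈ P.T ∨ a₂ = 0) →
        (a₃ ∈ P.T ∨ a₃ = 0) →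
        a₁ + a₂ + a₃ ∈ P.A0 → a₁ * P.dag + a₂ + a₃ ∈ P.A0 → a₂ + a₃ ∈ P.A0)
    (habs : ∀ a x : A, a ∈ P.T → a * x ∈ P.A0 → x ∈ P.A0) :
    ¬ ∃ a₁ a₂ a₃ : A,
        (a₁ ∈ P.T ∨ a₁ = 0) ∧ (a₂ ∈ P.T ∨ a₂ = 0) ∧ (a₃ ∈ P.T ∨ a₃ = 0) ∧
        ¬ (a₁ = 0 ∧ a₂ = 0 ∧ a₃ = 0) ∧
        a₁ + a₂ + a₃ * P.dag ∈ P.A0 ∧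
        a₁ + a₂ * P.dag + a₃ ∈ P.A0 ∧
        a₁ * P.dag + a₂ + a₃ ∈ P.A0 ∧
        a₁ + a₂ + a₃ ∈ P.A0 := by
  rintro ⟨a₁, a₂, a₃, h₁, h₂, h₃, hnz, c1, c2, c3, c4⟩
  -- pairwise sums in A0 via almost regularity
  have h23 : a₂ + a₃ ∈ P.A0 := halmost a₁ a₂ a₃ h₁ h₂ h₃ c4 c3
  have h13 : a₁ + a₃ ∈ P.A0 := by
    have := halmost a₂ a₁ a₃ h₂ h₁ h₃ (by rwa [show a₂ + a₁ + a₃ = a₁ + a₂ + a₃ by ring])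
      (by rwa [show a₂ * P.dag + a₁ + a₃ = a₁ + a₂ * P.dag + a₃ by ring])
    exact this
  have h12 : a₁ + a₂ ∈ P.A0 := by
    have := halmost a₃ a₁ a₂ h₃ h₁ h₂ (by rwa [show a₃ + a₁ + a₂ = a₁ + a₂ + a₃ by ring])
      (by rwa [show a₃ * P.dag + a₁ + a₂ = a₁ + a₂ + a₃ * P.dag by ring])
    exact this
  rcases h₁ with h₁ | h₁
  · rcases h₂ with h₂ | h₂
    · rcases h₃ with h₃ | h₃
      · exact hstrict a₂ a₃ h₂ h₃ ⟨a₁, Or.inl h₁,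
          by rwa [show a₂ + a₁ = a₁ + a₂ by ring],
          by rwa [show a₃ + a₁ = a₁ + a₃ by ring]⟩ h23
      · subst h₃
        have e1 : a₁ = 0 := P.A0_inter_T a₁ (by simpa using h13) h₁
        have e2 : a₂ = 0 := P.A0_inter_T a₂ (by simpa using h23) h₂
        exact hnz ⟨e1, e2, rfl⟩
    · subst h₂
      have e1 : a₁ = 0 := P.A0_inter_T a₁ (by simpa using h12) h₁
      rcases h₃ with h₃ | h₃
      · have e3 : a₃ = 0 := P.A0_inter_T a₃ (by simpa using h23) h₃
        exact hnz ⟨e1, rfl, e3⟩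
      · exact hnz ⟨e1, rfl, h₃⟩
  · subst h₁
    rcases h₂ with h₂ | h₂
    · have e2 : a₂ = 0 := P.A0_inter_T a₂ (by simpa using h12) h₂
      rcases h₃ with h₃ | h₃
      · have e3 : a₃ = 0 := P.A0_inter_T a₃ (by simpa using h13) h₃
        exact hnz ⟨rfl, e2, e3⟩
      · exact hnz ⟨rfl, e2, h₃⟩
    · subst h₂
      rcases h₃ with h₃ | h₃
      · have e3 : a₃ = 0 := P.A0_inter_T a₃ (by simpa using h13) h₃
        exact hnz ⟨rfl, rfl, e3⟩
      · exact hnz ⟨rfl, rfl, h₃⟩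
end
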